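/- arXiv:2310.20045 — 3 statements merged into one kernel-verified Lean document; each statement's English description precedes it below -/
import Mathlib

section
/- Let r ≥ 2 and d ≥ 1 be integers with d even. Let G be the subgroup of ℤ ⊕ ℤ consisting of all pairs (i, j) such that d divides i + j, and let K ⊆ G be the subgroup generated by the single element (rd(rd−1), rd(rd−1)). Then the quotient group G/K is isomorphic to ℤ ⊕ ℤ/(2r(rd−1))ℤ. -/
/-- The subgroup of `ℤ ⊕ ℤ` consisting of all pairs `(i, j)` such that `d` divides `i + j`. -/
def sumDvdSubgroup (d : ℕ) : AddSubgroup (ℤ × ℤ) where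
  carrier := {p | (d : ℤ) ∣ p.1 + p.2}
  zero_mem' := by simp
  add_mem' := by
    rintro ⟨a, b⟩ ⟨c, e⟩ h1 h2
    simpa [add_add_add_comm] using dvd_add h1 h2
  neg_mem' := by
    rintro ⟨a, b⟩ h
    have : (d : ℤ) ∣ -(a + b) := dvd_neg.mpr h
    simpa [neg_add, add_comm] using this

/-- Let `r ≥ 2`, `d ≥ 1` with `d` even, `G` the subgroup of `ℤ ⊕ ℤ` of pairs `(i,j)` with
`d ∣ i + j`, and `K ⊆ G` the subgroup generated by `(rd(rd-1), rd(rd-1))`. Then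
`G ⧸ K ≃ ℤ ⊕ ℤ/(2r(rd-1))ℤ`. -/
theorem quotient_char_group_even (r d : ℕ) (hr : 2 ≤ r) (hd : 1 ≤ d) (hde : Even d)
    (x : sumDvdSubgroup d)
    (hx : (x : ℤ × ℤ) =
      ((r : ℤ) * d * ((r : ℤ) * d - 1), (r : ℤ) * d * ((r : ℤ) * d - 1))) :
    Nonempty ((↥(sumDvdSubgroup d) ⧸ AddSubgroup.closure {x}) ≃+
      ℤ × ZMod (2 * r * (r * d - 1))) := by
  obtain ⟨s, hs⟩ := hde
  set n : ℕ := 2 * r * (r * d - 1) with hn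
  have hrd : 2 ≤ r * d := by nlinarith
  have hd0 : (d : ℤ) ≠ 0 := Int.natCast_ne_zero.mpr (by omega)
  have hds : (d : ℤ) = 2 * s := by rw [hs]; push_cast; ring
  have hN : (n : ℤ) = 2 * r * ((r : ℤ) * d - 1) := by
    rw [hn]; push_cast [Nat.cast_sub (by omega : 1 ≤ r * d)]; ring
  haveI : NeZero n := ⟨by
    have : 1 ≤ r * d - 1 := by omega
    simp only [hn]; positivity⟩
  set b : sumDvdSubgroup d → ℤ := fun p => ((p : ℤ × ℤ).1 + (p : ℤ × ℤ).2) / d with hbdef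
  have hb : ∀ p : sumDvdSubgroup d, (d : ℤ) * b p = (p : ℤ × ℤ).1 + (p : ℤ × ℤ).2 := by
    intro p
    rw [hbdef, mul_comm]
    exact Int.ediv_mul_cancel p.2
  have hbadd : ∀ p q : sumDvdSubgroup d, b (p + q) = b p + b q := by
    intro p q
    apply mul_left_cancel₀ hd0
    rw [mul_add, hb, hb, hb]
    simp only [AddSubgroup.coe_add, Prod.fst_add, Prod.snd_add]
    ring
  let f : sumDvdSubgroup d →+ ℤ × ZMod n :=
    { toFun := fun p => ((p : ℤ × ℤ).1 - s * b p, ((b p : ℤ) : ZMod n))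
      map_zero' := by
        have h0 : b 0 = 0 := by
          apply mul_left_cancel₀ hd0; rw [hb]; simp
        simp [h0]
      map_add' := by
        intro p q
        rw [hbadd p q]
        refine Prod.ext ?_ ?_
        · simp only [AddSubgroup.coe_add, Prod.fst_add]
          ring
        · simp only [Prod.snd_add]
          push_cast
          ring
           }
  have hfdef : ∀ p : sumDvdSubgroup d,
      f p = ((p : ℤ × ℤ).1 - s * b p, ((b p : ℤ) : ZMod n)) := fun _ => rfl
  have hbx : b x = n := by
    apply mul_left_cancel₀ hd0
    rw [hb, hx, hN]
    ring
  have hsx : (r : ℤ) * d * ((r : ℤ) * d - 1) = s * n := by rw [hN, hds]; ring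
  have hker : AddSubgroup.closure {x} = f.ker := by
    apply le_antisymm
    · rw [AddSubgroup.closure_le, Set.singleton_subset_iff]
      rw [SetLike.mem_coe, AddMonoidHom.mem_ker, hfdef, hbx, hx]
      have h0 : ((r : ℤ) * d * ((r : ℤ) * d - 1)) - s * n = 0 := by
        rw [hsx]; ring
      simp [h0]
    · intro p hp
      rw [AddMonoidHom.mem_ker, hfdef, Prod.mk_eq_zero] at hp
      obtain ⟨h1, h2⟩ := hp
      rw [ZMod.intCast_zmod_eq_zero_iff_dvd] at h2
      obtain ⟨t, ht⟩ := h2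
      rw [AddSubgroup.mem_closure_singleton]
      refine ⟨t, ?_⟩
      have h1' : (p : ℤ × ℤ).1 = s * b p := by linarith [h1]
      have h2' : (p : ℤ × ℤ).2 = s * b p := by
        have := hb p
        rw [hds] at this
        linarith
      apply Subtype.ext
      have hcoe : ((t • x : sumDvdSubgroup d) : ℤ × ℤ) = t • ((x : ℤ × ℤ)) := rfl
      have hp' : (p : ℤ × ℤ) = (s * b p, s * b p) := Prod.ext h1' h2'
      rw [hcoe, hx, hp', Prod.smul_mk, smul_eq_mul, ht, hsx, Prod.mk.injEq]
      constructor <;> ring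
  have hsurj : Function.Surjective f := by
    rintro ⟨u, c⟩
    have hmem : (d : ℤ) ∣ (u + s * c.val) + ((d : ℤ) * c.val - (u + s * c.val)) :=
      ⟨c.val, by ring⟩
    refine ⟨⟨(u + s * c.val, (d : ℤ) * c.val - (u + s * c.val)), hmem⟩, ?_⟩
    have hbp : b ⟨(u + s * c.val, (d : ℤ) * c.val - (u + s * c.val)), hmem⟩ = c.val := by
      apply mul_left_cancel₀ hd0
      rw [hb]; ring
    rw [hfdef, hbp]
    refine Prod.ext ?_ ?_
    · show (u + s * c.val - s * c.val : ℤ) = u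
      ring
    · show ((c.val : ℤ) : ZMod n) = c
      simp [ZMod.natCast_val, ZMod.cast_id]
  exact ⟨(QuotientAddGroup.quotientAddEquivOfEq hker).trans
    (QuotientAddGroup.quotientKerEquivOfSurjective f hsurj)⟩
end

section
/- Let r ≥ 2 and d ≥ 1 be integers with d odd. Let G be the subgroup of ℤ ⊕ ℤ consisting of all pairs (i, j) such that d divides i + j, and let K ⊆ G be the subgroup generated by the single element (rd(rd−1), rd(rd−1)). Then the quotient group G/K is isomorphic to ℤ ⊕ ℤ/(r(rd−1))ℤ. -/
/-- Let `r ≥ 2`, `d ≥ 1` with `d` odd, `G` the subgroup of `ℤ ⊕ ℤ` of pairs `(i,j)` with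
`d ∣ i + j`, and `K ⊆ G` the subgroup generated by `(rd(rd-1), rd(rd-1))`. Then
`G ⧸ K ≃ ℤ ⊕ ℤ/(r(rd-1))ℤ`. -/
theorem quotient_char_group_odd (r d : ℕ) (hr : 2 ≤ r) (hd : 1 ≤ d) (hde : Odd d)
    (x : sumDvdSubgroup d)
    (hx : (x : ℤ × ℤ) =
      ((r : ℤ) * d * ((r : ℤ) * d - 1), (r : ℤ) * d * ((r : ℤ) * d - 1))) :
    Nonempty ((↥(sumDvdSubgroup d) ⧸ AddSubgroup.closure {x}) ≃+
      ℤ × ZMod (r * (r * d - 1))) := by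
  obtain ⟨k, hk⟩ := hde
  have hd0 : (d : ℤ) ≠ 0 := by
    have : (1:ℤ) ≤ d := by exact_mod_cast hd
    omega
  set m : ℕ := r * (r * d - 1) with hm
  have hrd : 1 ≤ r * d := by nlinarith
  have hmz : (m : ℤ) = (r : ℤ) * ((r : ℤ) * d - 1) := by
    have : (m : ℤ) = (r : ℤ) * ((r * d : ℕ) - (1:ℕ) : ℕ) := by push_cast [hm]; ring
    rw [this]
    rw [Nat.cast_sub hrd]
    push_cast; ring
  set c : ℤ := ((d : ℤ) - 1) / 2 with hcdef
  have hc : 2 * c = (d : ℤ) - 1 := by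
    have hdk : (d : ℤ) = 2 * k + 1 := by exact_mod_cast hk
    have hkd : (d : ℤ) - 1 = 2 * k := by omega
    rw [hcdef, hkd, Int.mul_ediv_cancel_left _ (by norm_num)]
  -- the "v" coordinate
  have hv : ∀ p : sumDvdSubgroup d, (d : ℤ) * ((p.1.1 + p.1.2) / d) = p.1.1 + p.1.2 :=
    fun p => Int.mul_ediv_cancel' p.2
  -- the homomorphism
  have hadd : ∀ p q : sumDvdSubgroup d,
      ((((p+q) : sumDvdSubgroup d).1.2 - ((p+q) : sumDvdSubgroup d).1.1 : ℤ),
        ((((p+q) : sumDvdSubgroup d).1.1 - ((((p+q) : sumDvdSubgroup d).1.1 + ((p+q) : sumDvdSubgroup d).1.2) / d) * c : ℤ) : ZMod m))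
      = ((p.1.2 - p.1.1, ((p.1.1 - ((p.1.1 + p.1.2) / d) * c : ℤ) : ZMod m)) : ℤ × ZMod m)
        + (q.1.2 - q.1.1, ((q.1.1 - ((q.1.1 + q.1.2) / d) * c : ℤ) : ZMod m)) := by
    intro p q
    have hco : ((p+q) : sumDvdSubgroup d).1 = p.1 + q.1 := rfl
    have h1 : ((p+q) : sumDvdSubgroup d).1.1 = p.1.1 + q.1.1 := by rw [hco]; rfl
    have h2 : ((p+q) : sumDvdSubgroup d).1.2 = p.1.2 + q.1.2 := by rw [hco]; rfl
    have hvsum : ((((p+q) : sumDvdSubgroup d).1.1 + ((p+q) : sumDvdSubgroup d).1.2) / d)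
        = (p.1.1 + p.1.2) / d + (q.1.1 + q.1.2) / d := by
      apply mul_left_cancel₀ hd0
      rw [hv (p+q), h1, h2, mul_add, hv p, hv q]; ring
    rw [Prod.ext_iff]
    constructor
    · simp only [h1, h2, Prod.fst_add]; ring
    · have hint : ((p+q) : sumDvdSubgroup d).1.1
          - ((((p+q) : sumDvdSubgroup d).1.1 + ((p+q) : sumDvdSubgroup d).1.2) / d) * c
          = (p.1.1 - ((p.1.1 + p.1.2) / d) * c) + (q.1.1 - ((q.1.1 + q.1.2) / d) * c) := by
        rw [hvsum, h1]; ring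
      show ((_ : ℤ) : ZMod m) = _
      rw [hint, Int.cast_add, Prod.snd_add]
  let f : sumDvdSubgroup d →+ ℤ × ZMod m :=
    AddMonoidHom.mk' (fun p => (p.1.2 - p.1.1, ((p.1.1 - ((p.1.1 + p.1.2) / d) * c : ℤ) : ZMod m))) hadd
  have hfdef : ∀ p : sumDvdSubgroup d,
      f p = (p.1.2 - p.1.1, ((p.1.1 - ((p.1.1 + p.1.2) / d) * c : ℤ) : ZMod m)) := fun _ => rfl
  -- surjectivity
  have hsurj : Function.Surjective f := by
    rintro ⟨b, a⟩
    obtain ⟨A, rfl⟩ := ZMod.intCast_surjective a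
    have hmem : (A * d + b * c, A * d + b * ((d : ℤ) - c)) ∈ sumDvdSubgroup d :=
      ⟨2 * A + b, by ring⟩
    refine ⟨⟨_, hmem⟩, ?_⟩
    rw [hfdef]
    have hveq : ((A * d + b * c) + (A * d + b * ((d : ℤ) - c))) / d = 2 * A + b := by
      have h1 : ((A * d + b * c) + (A * d + b * ((d : ℤ) - c))) = d * (2 * A + b) := by ring
      rw [h1, Int.mul_ediv_cancel_left _ hd0]
    have hbeta : (A * d + b * ((d : ℤ) - c)) - (A * d + b * c) = b := by
      linear_combination (-b) * hc
    have halpha : (A * d + b * c) - (2 * A + b) * c = A := by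
      linear_combination (-A) * hc
    refine Prod.ext ?_ ?_
    · exact hbeta
    · show (((A * d + b * c) - ((A * d + b * c) + (A * d + b * ((d : ℤ) - c))) / d * c : ℤ) : ZMod m) = (A : ZMod m)
      rw [hveq, halpha]
  -- f x = 0
  have hx1 : x.1.1 = (d : ℤ) * m := by
    rw [show x.1.1 = ((x : ℤ × ℤ)).1 from rfl, hx, hmz]; ring
  have hx2 : x.1.2 = (d : ℤ) * m := by
    rw [show x.1.2 = ((x : ℤ × ℤ)).2 from rfl, hx, hmz]; ring
  have hfx : f x = 0 := by
    rw [hfdef]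
    have hvx : (x.1.1 + x.1.2) / d = 2 * m := by
      apply mul_left_cancel₀ hd0
      rw [hv x, hx1, hx2]; ring
    refine Prod.ext ?_ ?_
    · show x.1.2 - x.1.1 = 0
      rw [hx1, hx2]; ring
    · show (((x.1.1 - (x.1.1 + x.1.2) / d * c : ℤ)) : ZMod m) = 0
      rw [hvx, hx1]
      have : (d : ℤ) * m - 2 * m * c = m := by linear_combination (-(m : ℤ)) * hc
      rw [this]
      simp
  -- kernel
  have hker : f.ker = AddSubgroup.closure {x} := by
    ext p
    rw [AddMonoidHom.mem_ker, AddSubgroup.mem_closure_singleton]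
    constructor
    · intro hp
      rw [hfdef, Prod.mk_eq_zero] at hp
      obtain ⟨hb, ha⟩ := hp
      have hb' : p.1.2 = p.1.1 := by
        have : p.1.2 - p.1.1 = 0 := hb
        linarith
      rw [ZMod.intCast_zmod_eq_zero_iff_dvd] at ha
      obtain ⟨n, hn⟩ := ha
      refine ⟨n, ?_⟩
      have hdv : (d : ℤ) * ((p.1.1 + p.1.2) / d) = 2 * p.1.1 := by
        rw [hv p, hb']; ring
      -- v = 2 m n
      have hveq2 : (p.1.1 + p.1.2) / d = 2 * (m * n) := by
        have h2a : 2 * (p.1.1 - ((p.1.1 + p.1.2) / d) * c) = (p.1.1 + p.1.2) / d := by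
          linear_combination (-1) * hdv - ((p.1.1 + p.1.2) / d) * hc
        rw [hn] at h2a
        linarith
      have hp1 : p.1.1 = (d : ℤ) * m * n := by
        have := hdv
        rw [hveq2] at this
        linarith
      apply Subtype.ext
      have : ((n • x : sumDvdSubgroup d) : ℤ × ℤ) = n • (x : ℤ × ℤ) := rfl
      rw [this, Prod.ext_iff]
      constructor
      · show n • (x : ℤ × ℤ).1 = p.1.1
        rw [show ((x : ℤ × ℤ)).1 = x.1.1 from rfl, hx1, hp1, smul_eq_mul]; ring
      · show n • (x : ℤ × ℤ).2 = p.1.2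
        rw [show ((x : ℤ × ℤ)).2 = x.1.2 from rfl, hx2, hb', hp1, smul_eq_mul]; ring
    · rintro ⟨n, rfl⟩
      rw [map_zsmul, hfx, smul_zero]
  rw [← hker]
  exact ⟨QuotientAddGroup.quotientKerEquivOfSurjective f hsurj⟩
end

section
/- Let k be a field, and let r ≥ 2 and d ≥ 1 be integers with the characteristic of k not dividing 2rd; set N = rd − 2. In the polynomial ring k[a, b, c₀, …, c_N, s₁, s₂, s₃] (in N + 6 variables), let I₃ be the ideal generated by the three polynomials b²·c_N − s₁^r, a²·c₀ − s₂^r, and (a + b)²·(c₀ + c₁ + ⋯ + c_N) − s₃^r. Then for each i ∈ {1, 2, 3}, the variable sᵢ is a nonzerodivisor modulo I₃: for every polynomial f, if sᵢ·f ∈ I₃ then f ∈ I₃. -/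
/-!
Write `A = k[a, b, c₀, …, c_N]`. Each generator of `I₃` has the form `hⱼ - sⱼ ^ r` with
`0 ≠ hⱼ ∈ A`, so the quotient by `I₃` is obtained from `A` by adjoining an `r`-th root of `h₁`,
`h₂`, `h₃` one at a time. For a single step `B[s] ⧸ (J, s ^ r - h)`, division with remainder by
the monic `s ^ r - h` over `B ⧸ J` shows that every element of `B` regular modulo `J` stays
regular, and `s` itself is regular as soon as `h` is, because `s ^ r` acts as `h`. Induction on
the number of roots, starting from the domain `A`, shows that every `sᵢ` is regular.
-/

open MvPolynomial

/-- The variables `a, b, c₀, …, c_N, s₁, s₂, s₃` of the polynomial ring (with `N + 6`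
variables) appearing in the proof of Proposition 2.13. -/
inductive CVar (N : ℕ) where
  | a : CVar N
  | b : CVar N
  | c : Fin (N + 1) → CVar N
  | s : Fin 3 → CVar N

/-- The ideal `I₃` generated by `b²·c_N − s₁^r`, `a²·c₀ − s₂^r` and
`(a+b)²·(c₀ + ⋯ + c_N) − s₃^r`. -/
noncomputable def idealI3 (k : Type*) [Field k] (N r : ℕ) :
    Ideal (MvPolynomial (CVar N) k) :=
  Ideal.span
    { X CVar.b ^ 2 * X (CVar.c (Fin.last N)) - X (CVar.s 0) ^ r,
      X CVar.a ^ 2 * X (CVar.c 0) - X (CVar.s 1) ^ r,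
      (X CVar.a + X CVar.b) ^ 2 * (∑ i : Fin (N + 1), X (CVar.c i)) - X (CVar.s 2) ^ r }

namespace Polynomial

variable {A : Type*} [CommRing A]

theorem Monic.dvd_of_dvd_C_mul {f p : A[X]} (hf : f.Monic) {c : A} (hc : IsSMulRegular A c)
    (h : f ∣ C c * p) : f ∣ p := by
  rw [← modByMonic_eq_zero_iff_dvd hf] at h ⊢
  rw [← smul_eq_C_mul, smul_modByMonic] at h
  exact hc.polynomial (h.trans (smul_zero c).symm)

theorem mem_map_C_sup_span_singleton_iff (J : Ideal A) (f p : A[X]) :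
    p ∈ J.map C ⊔ Ideal.span {f} ↔
      f.map (Ideal.Quotient.mk J) ∣ p.map (Ideal.Quotient.mk J) := by
  have hsurj := map_surjective _ (Ideal.Quotient.mk_surjective (I := J))
  rw [← Ideal.mem_span_singleton, ← coe_mapRingHom, ← Set.image_singleton, ← Ideal.map_span,
    ← Ideal.mem_comap, Ideal.comap_map_of_surjective _ hsurj, ← RingHom.ker_eq_comap_bot,
    ker_mapRingHom, Ideal.mk_ker, sup_comm]

theorem isSMulRegular_C_quotient_map_C_sup {J : Ideal A} {f : A[X]} (hf : f.Monic) {x : A}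
    (hx : IsSMulRegular (A ⧸ J) x) :
    IsSMulRegular (A[X] ⧸ J.map C ⊔ Ideal.span {f}) (C x) := by
  rw [isSMulRegular_quotient_iff_mem_of_smul_mem]
  intro p hp
  rw [smul_eq_mul, mem_map_C_sup_span_singleton_iff, Polynomial.map_mul, map_C] at hp
  rw [mem_map_C_sup_span_singleton_iff]
  refine (hf.map _).dvd_of_dvd_C_mul ?_ hp
  rwa [← Ideal.Quotient.algebraMap_eq, isSMulRegular_algebraMap_iff]

theorem isSMulRegular_X_quotient_map_C_sup {J : Ideal A} {g : A} {r : ℕ} (hr : r ≠ 0)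
    (hg : IsSMulRegular (A ⧸ J) g) :
    IsSMulRegular (A[X] ⧸ J.map C ⊔ Ideal.span {X ^ r - C g}) (X : A[X]) := by
  set I := J.map C ⊔ Ideal.span {X ^ r - C g}
  have hXr : Ideal.Quotient.mk I (X ^ r) = Ideal.Quotient.mk I (C g) :=
    Ideal.Quotient.eq.mpr (Ideal.mem_sup_right (Ideal.mem_span_singleton_self _))
  rw [← IsSMulRegular.pow_iff (Nat.pos_of_ne_zero hr),
    ← isSMulRegular_algebraMap_iff (A := A[X] ⧸ I), Ideal.Quotient.algebraMap_eq, hXr,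
    ← Ideal.Quotient.algebraMap_eq, isSMulRegular_algebraMap_iff]
  exact isSMulRegular_C_quotient_map_C_sup (monic_X_pow_sub_C g hr) hg

end Polynomial

theorem isSMulRegular_quotient_map_ringEquiv_iff {A B E : Type*} [CommRing A] [CommRing B]
    [EquivLike E A B] [RingEquivClass E A B] (e : E) (J : Ideal A) (x : A) :
    IsSMulRegular (B ⧸ J.map e) (e x) ↔ IsSMulRegular (A ⧸ J) x := by
  simp only [isSMulRegular_quotient_iff_mem_of_smul_mem, smul_eq_mul, ← map_mul,
    (EquivLike.surjective e).forall, Ideal.mem_map_of_equiv, (EquivLike.injective e).eq_iff,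
    exists_eq_right]

namespace MvPolynomial

variable {A : Type*} [CommRing A]

/-- The quotient by this ideal adjoins an `r`-th root `X j` of each `h j`. -/
noncomputable def adjoinRootsIdeal {σ : Type*} (r : ℕ) (h : σ → A) :
    Ideal (MvPolynomial σ A) :=
  Ideal.span (Set.range fun j => C (h j) - X j ^ r)

variable {n r : ℕ}

theorem finSuccEquiv_C (a : A) : finSuccEquiv A n (C a) = Polynomial.C (C a) := by
  simp [finSuccEquiv_apply]

theorem map_finSuccEquiv_adjoinRootsIdeal (h : Fin (n + 1) → A) :
    (adjoinRootsIdeal r h).map (finSuccEquiv A n) =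
      (adjoinRootsIdeal r (Fin.tail h)).map Polynomial.C ⊔
        Ideal.span {Polynomial.X ^ r - Polynomial.C (C (h 0))} := by
  rw [adjoinRootsIdeal, Ideal.map_span, ← Set.range_comp, Fin.range_fin_succ, Ideal.span_insert,
    adjoinRootsIdeal, Ideal.map_span, ← Set.range_comp, sup_comm, ← Ideal.span_singleton_neg]
  simp only [Fin.tail_def, Function.comp_def, map_sub, map_pow, neg_sub, finSuccEquiv_X_zero,
    finSuccEquiv_X_succ, finSuccEquiv_C]

theorem isSMulRegular_quotient_adjoinRootsIdeal_succ_iff (h : Fin (n + 1) → A)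
    (p : MvPolynomial (Fin (n + 1)) A) :
    IsSMulRegular (MvPolynomial (Fin (n + 1)) A ⧸ adjoinRootsIdeal r h) p ↔
      IsSMulRegular (Polynomial (MvPolynomial (Fin n) A) ⧸
          (adjoinRootsIdeal r (Fin.tail h)).map Polynomial.C ⊔
            Ideal.span {Polynomial.X ^ r - Polynomial.C (C (h 0))})
        (finSuccEquiv A n p) := by
  rw [← map_finSuccEquiv_adjoinRootsIdeal, isSMulRegular_quotient_map_ringEquiv_iff]

theorem isSMulRegular_C_quotient_adjoinRootsIdeal (hr : r ≠ 0) (h : Fin n → A) {x : A}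
    (hx : IsSMulRegular A x) :
    IsSMulRegular (MvPolynomial (Fin n) A ⧸ adjoinRootsIdeal r h)
      (C x : MvPolynomial (Fin n) A) := by
  induction n with
  | zero =>
    have hbot : adjoinRootsIdeal r h = ⊥ := by simp [adjoinRootsIdeal]
    rw [hbot, isSMulRegular_quotient_iff_mem_of_smul_mem]
    intro p hp
    rw [Ideal.mem_bot, smul_eq_mul, C_mul'] at hp
    rw [Ideal.mem_bot]
    ext m
    exact hx (by simpa using congrArg (coeff m) hp)
  | succ n ih =>
    rw [isSMulRegular_quotient_adjoinRootsIdeal_succ_iff, finSuccEquiv_C]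
    exact Polynomial.isSMulRegular_C_quotient_map_C_sup (Polynomial.monic_X_pow_sub_C _ hr)
      (ih _)

theorem isSMulRegular_X_quotient_adjoinRootsIdeal (hr : r ≠ 0) (h : Fin n → A)
    (hh : ∀ j, IsSMulRegular A (h j)) (i : Fin n) :
    IsSMulRegular (MvPolynomial (Fin n) A ⧸ adjoinRootsIdeal r h)
      (X i : MvPolynomial (Fin n) A) := by
  induction n with
  | zero => exact i.elim0
  | succ n ih =>
    rw [isSMulRegular_quotient_adjoinRootsIdeal_succ_iff]
    induction i using Fin.cases with
    | zero =>
      rw [finSuccEquiv_X_zero]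
      exact Polynomial.isSMulRegular_X_quotient_map_C_sup hr
        (isSMulRegular_C_quotient_adjoinRootsIdeal hr _ (hh 0))
    | succ j =>
      rw [finSuccEquiv_X_succ]
      exact Polynomial.isSMulRegular_C_quotient_map_C_sup (Polynomial.monic_X_pow_sub_C _ hr)
        (ih _ (fun j => hh j.succ) j)

end MvPolynomial

namespace CVar

variable (N : ℕ)

def sumEquiv : CVar N ≃ Fin 3 ⊕ (Fin (N + 1) ⊕ Bool) where
  toFun
    | .a => .inr (.inr false)
    | .b => .inr (.inr true)
    | .c j => .inr (.inl j)
    | .s m => .inl m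
  invFun
    | .inl m => .s m
    | .inr (.inl j) => .c j
    | .inr (.inr false) => .a
    | .inr (.inr true) => .b
  left_inv v := by cases v <;> rfl
  right_inv v := by rcases v with m | (j | (_ | _)) <;> rfl

variable (k : Type*) [Field k]

noncomputable def mvPolynomialEquiv :
    MvPolynomial (CVar N) k ≃+* MvPolynomial (Fin 3) (MvPolynomial (Fin (N + 1) ⊕ Bool) k) :=
  ((renameEquiv k (sumEquiv N)).trans (sumAlgEquiv k _ _)).toRingEquiv

/-- `I₃` adjoins `r`-th roots `s₁, s₂, s₃` of these, written in the variables `cⱼ = X (inl j)`,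
`a = X (inr false)`, `b = X (inr true)`. -/
noncomputable def rootedPolys : Fin 3 → MvPolynomial (Fin (N + 1) ⊕ Bool) k :=
  ![X (.inr true) ^ 2 * X (.inl (Fin.last N)),
    X (.inr false) ^ 2 * X (.inl 0),
    (X (.inr false) + X (.inr true)) ^ 2 * ∑ j, X (.inl j)]

theorem rootedPolys_ne_zero (j : Fin 3) : rootedPolys N k j ≠ 0 := by
  fin_cases j
  · simp [rootedPolys, X_ne_zero]
  · simp [rootedPolys, X_ne_zero]
  · intro h
    simpa [rootedPolys] using
      congrArg (aeval (Sum.elim (Pi.single 0 (1 : k)) fun b => if b then 0 else 1)) h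

theorem map_mvPolynomialEquiv_idealI3 (r : ℕ) :
    (idealI3 k N r).map (mvPolynomialEquiv N k) = adjoinRootsIdeal r (rootedPolys N k) := by
  rw [idealI3, adjoinRootsIdeal, Ideal.map_span]
  congr 1
  ext p
  simp [Fin.exists_fin_succ, mvPolynomialEquiv, sumEquiv, rootedPolys]

theorem mvPolynomialEquiv_X_s (i : Fin 3) : mvPolynomialEquiv N k (X (s i)) = X i := by
  simp [mvPolynomialEquiv, sumEquiv]

end CVar

theorem s_nonzerodivisor_mod_I3_general {k : Type*} [Field k] (r d : ℕ) (hr : 2 ≤ r) (i : Fin 3)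
    (f : MvPolynomial (CVar (r * d - 2)) k)
    (hf : X (CVar.s i) * f ∈ idealI3 k (r * d - 2) r) :
    f ∈ idealI3 k (r * d - 2) r := by
  refine mem_of_isSMulRegular_quotient_of_smul_mem ?_ hf
  rw [← isSMulRegular_quotient_map_ringEquiv_iff (CVar.mvPolynomialEquiv _ k),
    CVar.map_mvPolynomialEquiv_idealI3, CVar.mvPolynomialEquiv_X_s]
  exact isSMulRegular_X_quotient_adjoinRootsIdeal (by omega) _
    (fun j => .of_ne_zero (CVar.rootedPolys_ne_zero _ k j)) i

/-- Each variable `sᵢ` is a nonzerodivisor modulo `I₃`. -/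
theorem s_nonzerodivisor_mod_I3 {k : Type*} [Field k] (r d : ℕ) (hr : 2 ≤ r) (hd : 1 ≤ d)
    (hchar : ¬ (ringChar k ∣ 2 * r * d)) (i : Fin 3)
    (f : MvPolynomial (CVar (r * d - 2)) k)
    (hf : X (CVar.s i) * f ∈ idealI3 k (r * d - 2) r) :
    f ∈ idealI3 k (r * d - 2) r :=
  s_nonzerodivisor_mod_I3_general r d hr i f hf
end
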